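/- For all positive integers p, r and every positive integer n, the Raney number satisfies the ordered-partition expansion: (r/(n·p+r))·C(n·p+r, n) = Σ_λ C(r, λ₁)·C(p·λ₁, λ₂)·C(p·λ₂, λ₃)···C(p·λ_{j-1}, λ_j), where the sum ranges over all ordered partitions (compositions) λ = (λ₁, λ₂, …, λ_j) of n into positive parts, of any length j ≥ 1, and C(a,b) denotes the binomial coefficient. (The equality may be read in the rational numbers.) -/

import Mathlib

/-!
Splitting off the first block `k + 1` of a composition of `n + 1` turns the sum over
compositions into `Σ_k C(r, k + 1) · S_{p(k+1)}(n - k)`, where `S_s(m)` is the same sum for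
compositions of `m` with initial top `s`. By strong induction on `n` it therefore suffices that
the Raney numbers satisfy the same recursion
`R_{p,r}(n + 1) = Σ_k C(r, k + 1) · R_{p,p(k+1)}(n - k)`. Both sides equal
`r / (n + 1) · C(r - 1 + (n + 1) p, n)`: on the right, `R_{p,p(k+1)}(n - k)` has top
`(n + 1) p` for every `k`, and after absorbing `(k + 1) C(r, k + 1) = r C(r - 1, k)` the sum
collapses by Vandermonde's identity.
-/

/-- The product `C(prev, λ₁) · C(p·λ₁, λ₂) · ⋯ · C(p·λ_{j-1}, λ_j)` along a list of parts,
where the first binomial's top is `prev` and each subsequent top is `p` times the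
previous part. -/
def raneyChainProd (p : ℕ) : ℕ → List ℕ → ℕ
  | _, [] => 1
  | prev, a :: t => prev.choose a * raneyChainProd p (p * a) t

open Finset

namespace Composition

theorem sum_blocks_zero {M : Type*} [AddCommMonoid M] (f : List ℕ → M) :
    ∑ c : Composition 0, f c.blocks = f [] := by
  have (c : Composition 0) : c.blocks = [] := c.blocks_eq_nil.2 rfl
  simp only [this, sum_const, card_univ, composition_card, zero_tsub, pow_zero, one_smul]

variable {n : ℕ}

theorem blocks_ne_nil (c : Composition (n + 1)) : c.blocks ≠ [] :=
  mt c.blocks_eq_nil.1 n.succ_ne_zero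

theorem head_blocks_pos (c : Composition (n + 1)) : 0 < c.blocks.head c.blocks_ne_nil :=
  c.blocks_pos (List.head_mem _)

theorem head_blocks_add_sum_tail (c : Composition (n + 1)) :
    c.blocks.head c.blocks_ne_nil + c.blocks.tail.sum = n + 1 := by
  rw [← List.sum_cons, List.cons_head_tail, c.blocks_sum]

def consEquiv (n : ℕ) : (Σ k : Fin (n + 1), Composition (n - k)) ≃ Composition (n + 1) where
  toFun kc := ((single (kc.1 + 1) kc.1.1.succ_pos).append kc.2).cast (by omega)
  invFun c :=
    ⟨⟨c.blocks.head c.blocks_ne_nil - 1, by have := c.head_blocks_add_sum_tail; omega⟩,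
      ⟨c.blocks.tail, fun h => c.blocks_pos (List.mem_of_mem_tail h), by
        have := c.head_blocks_add_sum_tail; have := c.head_blocks_pos; simp only; omega⟩⟩
  left_inv _ := rfl
  right_inv c := by
    ext1
    conv_rhs => rw [← List.cons_head_tail c.blocks_ne_nil]
    simp [Nat.sub_add_cancel c.head_blocks_pos]

theorem sum_blocks_succ {M : Type*} [AddCommMonoid M] (f : List ℕ → M) (n : ℕ) :
    ∑ c : Composition (n + 1), f c.blocks =
      ∑ k ∈ range (n + 1), ∑ c : Composition (n - k), f ((k + 1) :: c.blocks) := by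
  rw [← (consEquiv n).sum_comp, Fintype.sum_sigma,
    ← Fin.sum_univ_eq_sum_range (fun k => ∑ c : Composition (n - k), f ((k + 1) :: c.blocks))]
  rfl

end Composition

def raney (p r n : ℕ) : ℚ := r / (n * p + r) * (n * p + r).choose n

section Raney

variable {p r : ℕ}

theorem raney_zero (hr : 0 < r) : raney p r 0 = 1 := by
  have : (r : ℚ) ≠ 0 := by positivity
  simp [raney, this]

theorem raney_succ (hr : 0 < r) (n : ℕ) :
    raney p r (n + 1) = r / (n + 1) * (r - 1 + (n + 1) * p).choose n := by
  have hN : (n + 1) * p + r = r - 1 + (n + 1) * p + 1 := by omega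
  have key := congrArg (Nat.cast (R := ℚ)) (Nat.add_one_mul_choose_eq (r - 1 + (n + 1) * p) n)
  rw [← hN] at key
  push_cast at key
  have : ((n : ℚ) + 1) * p + r ≠ 0 := by positivity
  rw [raney]
  push_cast
  field_simp
  linear_combination -key

theorem raney_mul_succ_sub (hp : 0 < p) {k n : ℕ} (hk : k ≤ n) :
    raney p (p * (k + 1)) (n - k) = (k + 1) / (n + 1) * ((n + 1) * p).choose (n - k) := by
  have hN : (n - k) * p + p * (k + 1) = (n + 1) * p := by
    rw [mul_comm p, ← add_mul]
    congr 1
    omega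
  have hNq : ((n - k : ℕ) : ℚ) * p + (p * (k + 1) : ℕ) = (n + 1) * p := by exact_mod_cast hN
  have : (p : ℚ) ≠ 0 := by positivity
  rw [raney, hNq, hN]
  push_cast
  field_simp

theorem raney_succ_eq_sum (hp : 0 < p) (hr : 0 < r) (n : ℕ) :
    raney p r (n + 1) =
      ∑ k ∈ range (n + 1), r.choose (k + 1) * raney p (p * (k + 1)) (n - k) := by
  have absorb (k : ℕ) : (r.choose (k + 1) : ℚ) * (k + 1) = r * (r - 1).choose k := by
    have := Nat.add_one_mul_choose_eq (r - 1) k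
    rw [Nat.sub_add_cancel hr] at this
    exact_mod_cast this.symm
  calc raney p r (n + 1)
      = r / (n + 1) *
          ∑ k ∈ range (n + 1), ((r - 1).choose k * ((n + 1) * p).choose (n - k) : ℚ) := by
        rw [raney_succ hr, Nat.add_choose_eq, Finset.Nat.sum_antidiagonal_eq_sum_range_succ_mk]
        push_cast
        rfl
    _ = ∑ k ∈ range (n + 1), r.choose (k + 1) * raney p (p * (k + 1)) (n - k) := by
        rw [mul_sum]
        refine sum_congr rfl fun k hk => ?_
        rw [raney_mul_succ_sub hp (Nat.lt_succ_iff.1 (mem_range.1 hk))]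
        linear_combination (-((n + 1) * p).choose (n - k) / (n + 1) : ℚ) * absorb k

theorem sum_raneyChainProd_eq_raney (hp : 0 < p) (hr : 0 < r) (n : ℕ) :
    ∑ c : Composition n, (raneyChainProd p r c.blocks : ℚ) = raney p r n := by
  induction n using Nat.strong_induction_on generalizing r with
  | _ n ih =>
    rcases n with _ | n
    · rw [Composition.sum_blocks_zero (fun l => (raneyChainProd p r l : ℚ)), raney_zero hr]
      exact Nat.cast_one
    · rw [Composition.sum_blocks_succ (fun l => (raneyChainProd p r l : ℚ)),
        raney_succ_eq_sum hp hr]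
      refine sum_congr rfl fun k _ => ?_
      simp only [raneyChainProd, Nat.cast_mul, ← mul_sum]
      rw [ih (n - k) (by omega) (by positivity)]

end Raney

theorem raney_eq_sum_over_compositions_general (p r n : ℕ) (hp : 0 < p) (hr : 0 < r) :
    (r : ℚ) / (n * p + r) * ((n * p + r).choose n) =
      ∑ c : Composition n, (raneyChainProd p r c.blocks : ℚ) :=
  (sum_raneyChainProd_eq_raney hp hr n).symm

/-- Ordered-partition (composition) expansion of the Raney numbers:
`R_{p,r}(n) = (r/(np+r))·C(np+r, n) = Σ_λ C(r, λ₁)·C(p·λ₁, λ₂)···C(p·λ_{j-1}, λ_j)`,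
the sum ranging over all compositions `λ` of `n`. -/
theorem raney_eq_sum_over_compositions (p r n : ℕ) (hp : 0 < p) (hr : 0 < r) (hn : 0 < n) :
    (r : ℚ) / (n * p + r) * ((n * p + r).choose n) =
      ∑ c : Composition n, (raneyChainProd p r c.blocks : ℚ) :=
  raney_eq_sum_over_compositions_general p r n hp hr
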